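/- arXiv:0809.4964 — 4 statements merged into one kernel-verified Lean document; each statement's English description precedes it below -/
import Mathlib

section
/- For every filter ℱ on a quasi-uniform space (X, 𝒰), the 2-envelope 𝒟_𝒰(ℱ) is 2-round, i.e., 𝒟_𝒰(𝒟_𝒰(ℱ)) = 𝒟_𝒰(ℱ). -/
open Filter Set

variable {X Y : Type*}

/-- Image of a set under a relation: `U(A) = {y : ∃ x ∈ A, (x,y) ∈ U}`. -/
def relImg (U : Set (X × X)) (A : Set X) : Set X := {y | ∃ x ∈ A, (x, y) ∈ U}

/-- Inverse image: `U⁻¹(A) = {y : ∃ x ∈ A, (y,x) ∈ U}`. -/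
def relPre (U : Set (X × X)) (A : Set X) : Set X := {y | ∃ x ∈ A, (y, x) ∈ U}

/-- A quasi-uniformity: a filter of reflexive relations, each containing
a relational square of a member. -/
structure IsQuasiUniformity (𝒰 : Filter (X × X)) : Prop where
  refl : ∀ U ∈ 𝒰, SetRel.id ⊆ U
  comp : ∀ U ∈ 𝒰, ∃ V ∈ 𝒰, SetRel.comp V V ⊆ U

/-- A filter is stable if `⋂_{F ∈ ℱ} U(F) ∈ ℱ` for all `U ∈ 𝒰`. -/
def IsStable (𝒰 : Filter (X × X)) (ℱ : Filter X) : Prop :=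
  ∀ U ∈ 𝒰, (⋂ F ∈ ℱ.sets, relImg U F) ∈ ℱ

/-- `U_ℱ = ⋂_{F ∈ ℱ} (U⁻¹(F) ∩ U(F))`. -/
def bigU (U : Set (X × X)) (ℱ : Filter X) : Set X :=
  ⋂ F ∈ ℱ.sets, (relPre U F ∩ relImg U F)

/-- A filter is doubly stable if `U_ℱ ∈ ℱ` for all `U ∈ 𝒰`. -/
def IsDoublyStable (𝒰 : Filter (X × X)) (ℱ : Filter X) : Prop :=
  ∀ U ∈ 𝒰, bigU U ℱ ∈ ℱ

/-- The 2-envelope of a filter. -/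
def envelope (𝒰 : Filter (X × X)) (ℱ : Filter X) : Filter X :=
  Filter.generate {S | ∃ U ∈ 𝒰, ∃ F ∈ ℱ, S = relPre U F ∩ relImg U F}

/-- The filter `ℱ_𝒰` generated by `{U_ℱ : U ∈ 𝒰}`. -/
def filterU (𝒰 : Filter (X × X)) (ℱ : Filter X) : Filter X :=
  Filter.generate {S | ∃ U ∈ 𝒰, S = bigU U ℱ}

/-- `τ(𝒰)`-cluster points of a filter. -/
def fwdCluster (𝒰 : Filter (X × X)) (ℱ : Filter X) : Set X :=
  {x | ∀ F ∈ ℱ, ∀ U ∈ 𝒰, ∃ y ∈ F, (x, y) ∈ U}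

/-- `τ(𝒰⁻¹)`-cluster points of a filter. -/
def bwdCluster (𝒰 : Filter (X × X)) (ℱ : Filter X) : Set X :=
  {x | ∀ F ∈ ℱ, ∀ U ∈ 𝒰, ∃ y ∈ F, (y, x) ∈ U}

/-- The set of double cluster points of a filter. -/
def doubleCluster (𝒰 : Filter (X × X)) (ℱ : Filter X) : Set X :=
  fwdCluster 𝒰 ℱ ∩ bwdCluster 𝒰 ℱ

/-- The basic entourage `U_D = U_+ ∩ U_-` of the stability quasi-uniformity. -/
def UD (U : Set (X × X)) : Set (Filter X × Filter X) :=
  {p | (⋂ F ∈ p.1.sets, relImg U F) ∈ p.2 ∧ (⋂ G ∈ p.2.sets, relPre U G) ∈ p.1}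

/-! Reflexivity of the entourages gives `ℱ ≤ 𝒟(ℱ)`. Conversely, if `V ∘ V ⊆ U`, then
`G = V⁻¹(F) ∩ V(F)` belongs to `𝒟(ℱ)`, and the generator `V⁻¹(G) ∩ V(G)` of `𝒟(𝒟(ℱ))`
lies inside `U⁻¹(F) ∩ U(F)`. -/

section Relations

variable {U V : Set (X × X)} {A B : Set X}

lemma relPre_mono (h : A ⊆ B) : relPre U A ⊆ relPre U B :=
  fun _ ⟨x, hx, hyx⟩ => ⟨x, h hx, hyx⟩

lemma relImg_mono (h : A ⊆ B) : relImg U A ⊆ relImg U B :=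
  fun _ ⟨x, hx, hxy⟩ => ⟨x, h hx, hxy⟩

lemma relPre_relPre_subset (hVU : SetRel.comp V V ⊆ U) (A : Set X) :
    relPre V (relPre V A) ⊆ relPre U A :=
  fun _ ⟨_, ⟨z, hz, hxz⟩, hyx⟩ => ⟨z, hz, hVU ⟨_, hyx, hxz⟩⟩

lemma relImg_relImg_subset (hVU : SetRel.comp V V ⊆ U) (A : Set X) :
    relImg V (relImg V A) ⊆ relImg U A :=
  fun _ ⟨_, ⟨z, hz, hzx⟩, hxy⟩ => ⟨z, hz, hVU ⟨_, hzx, hxy⟩⟩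

lemma subset_relPre_inter_relImg (hU : SetRel.id ⊆ U) (A : Set X) :
    A ⊆ relPre U A ∩ relImg U A :=
  fun x hx => ⟨⟨x, hx, hU rfl⟩, ⟨x, hx, hU rfl⟩⟩

lemma relPre_inter_relImg_relPre_inter_relImg_subset (hVU : SetRel.comp V V ⊆ U) (A : Set X) :
    relPre V (relPre V A ∩ relImg V A) ∩ relImg V (relPre V A ∩ relImg V A) ⊆
      relPre U A ∩ relImg U A :=
  inter_subset_inter
    ((relPre_mono inter_subset_left).trans (relPre_relPre_subset hVU A))
    ((relImg_mono inter_subset_right).trans (relImg_relImg_subset hVU A))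

end Relations

section Envelope

variable {𝒰 : Filter (X × X)} {ℱ : Filter X}

lemma relPre_inter_relImg_mem_envelope {U : Set (X × X)} {F : Set X} (hU : U ∈ 𝒰)
    (hF : F ∈ ℱ) :
    relPre U F ∩ relImg U F ∈ envelope 𝒰 ℱ :=
  mem_generate_of_mem ⟨U, hU, F, hF, rfl⟩

lemma le_envelope (h𝒰 : ∀ U ∈ 𝒰, SetRel.id ⊆ U) : ℱ ≤ envelope 𝒰 ℱ := by
  rw [envelope, le_generate_iff]
  rintro _ ⟨U, hU, F, hF, rfl⟩
  exact mem_of_superset hF (subset_relPre_inter_relImg (h𝒰 U hU) F)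

lemma envelope_envelope_le (h𝒰 : ∀ U ∈ 𝒰, ∃ V ∈ 𝒰, SetRel.comp V V ⊆ U) :
    envelope 𝒰 (envelope 𝒰 ℱ) ≤ envelope 𝒰 ℱ := by
  refine le_generate_iff.2 ?_
  rintro _ ⟨U, hU, F, hF, rfl⟩
  obtain ⟨V, hV, hVU⟩ := h𝒰 U hU
  have hG := relPre_inter_relImg_mem_envelope (𝒰 := 𝒰) hV hF
  exact mem_of_superset (relPre_inter_relImg_mem_envelope hV hG)
    (relPre_inter_relImg_relPre_inter_relImg_subset hVU F)

end Envelope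

theorem stmt6 (𝒰 : Filter (X × X)) (h𝒰 : IsQuasiUniformity 𝒰) (ℱ : Filter X) :
    envelope 𝒰 (envelope 𝒰 ℱ) = envelope 𝒰 ℱ :=
  le_antisymm (envelope_envelope_le h𝒰.comp) (le_envelope h𝒰.refl)
end

section
/- For each doubly stable filter ℱ on a quasi-uniform space (X, 𝒰), the filter ℱ_𝒰 has a base consisting of τ(𝒰^s)-open subsets of X. -/
open Filter Set

variable {X Y : Type*}

/-- A set is `τ(𝒰^s)`-open if it is a neighborhood of each of its points for the
symmetrized entourage balls. -/
def IsOpenS (𝒰 : Filter (X × X)) (S : Set X) : Prop :=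
  ∀ x ∈ S, ∃ U ∈ 𝒰, {y | (x, y) ∈ U ∧ (y, x) ∈ U} ⊆ S

/-! The `τ(𝒰^s)`-interior of `U_ℱ` is `τ(𝒰^s)`-open, lies in `U_ℱ`, and contains `V_ℱ` whenever
`V ∘ V ⊆ U`: a point symmetrically `V`-close to a point of `V_ℱ` is, by composing, `U`-related in
both directions to every member of `ℱ`. So these interiors form a base of `ℱ_𝒰`. -/

lemma bigU_mono {U V : Set (X × X)} (h : U ⊆ V) (ℱ : Filter X) : bigU U ℱ ⊆ bigU V ℱ := by
  simp only [bigU, subset_def, mem_iInter]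
  rintro x hx F hF
  obtain ⟨⟨a, ha, hxa⟩, ⟨b, hb, hbx⟩⟩ := hx F hF
  exact ⟨⟨a, ha, h hxa⟩, ⟨b, hb, h hbx⟩⟩

lemma mem_filterU_iff {𝒰 : Filter (X × X)} {ℱ : Filter X} {T : Set X} :
    T ∈ filterU 𝒰 ℱ ↔ ∃ U ∈ 𝒰, bigU U ℱ ⊆ T := by
  refine ⟨fun hT => ?_, fun ⟨U, hU, hUT⟩ => mem_of_superset (mem_generate_of_mem ⟨U, hU, rfl⟩) hUT⟩
  induction hT with
  | basic h => obtain ⟨U, hU, rfl⟩ := h; exact ⟨U, hU, subset_rfl⟩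
  | univ => exact ⟨univ, univ_mem, subset_univ _⟩
  | superset _ hsub ih => obtain ⟨U, hU, h⟩ := ih; exact ⟨U, hU, h.trans hsub⟩
  | inter _ _ ih₁ ih₂ =>
    obtain ⟨U, hU, h₁⟩ := ih₁
    obtain ⟨V, hV, h₂⟩ := ih₂
    exact ⟨U ∩ V, inter_mem hU hV, subset_inter
      ((bigU_mono inter_subset_left ℱ).trans h₁) ((bigU_mono inter_subset_right ℱ).trans h₂)⟩

def symBall (W : Set (X × X)) (x : X) : Set X := {y | (x, y) ∈ W ∧ (y, x) ∈ W}

def interiorS (𝒰 : Filter (X × X)) (A : Set X) : Set X := {x | ∃ W ∈ 𝒰, symBall W x ⊆ A}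

lemma interiorS_subset {𝒰 : Filter (X × X)} (h𝒰 : IsQuasiUniformity 𝒰) (A : Set X) :
    interiorS 𝒰 A ⊆ A := by
  rintro x ⟨W, hW, hball⟩
  exact hball ⟨h𝒰.refl W hW rfl, h𝒰.refl W hW rfl⟩

lemma isOpenS_interiorS {𝒰 : Filter (X × X)} (h𝒰 : IsQuasiUniformity 𝒰) (A : Set X) :
    IsOpenS 𝒰 (interiorS 𝒰 A) := by
  rintro x ⟨W, hW, hball⟩
  obtain ⟨W', hW', hW'W⟩ := h𝒰.comp W hW
  refine ⟨W', hW', fun z hxz => ⟨W', hW', fun w hzw => hball ?_⟩⟩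
  exact ⟨hW'W ⟨z, hxz.1, hzw.1⟩, hW'W ⟨z, hzw.2, hxz.2⟩⟩

lemma bigU_subset_interiorS_bigU {𝒰 : Filter (X × X)} {U V : Set (X × X)} (hV : V ∈ 𝒰)
    (hVU : SetRel.comp V V ⊆ U) (ℱ : Filter X) : bigU V ℱ ⊆ interiorS 𝒰 (bigU U ℱ) := by
  refine fun x hx => ⟨V, hV, fun z hz => ?_⟩
  simp only [bigU, mem_iInter] at hx ⊢
  intro F hF
  obtain ⟨⟨a, ha, hxa⟩, ⟨b, hb, hbx⟩⟩ := hx F hF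
  exact ⟨⟨a, ha, hVU ⟨x, hz.2, hxa⟩⟩, ⟨b, hb, hVU ⟨x, hbx, hz.1⟩⟩⟩

theorem stmt10_general (𝒰 : Filter (X × X)) (h𝒰 : IsQuasiUniformity 𝒰) (ℱ : Filter X) :
    ∀ T ∈ filterU 𝒰 ℱ, ∃ S ∈ filterU 𝒰 ℱ, IsOpenS 𝒰 S ∧ S ⊆ T := by
  intro T hT
  obtain ⟨U, hU, hUT⟩ := mem_filterU_iff.1 hT
  obtain ⟨V, hV, hVU⟩ := h𝒰.comp U hU
  exact ⟨interiorS 𝒰 (bigU U ℱ), mem_filterU_iff.2 ⟨V, hV, bigU_subset_interiorS_bigU hV hVU ℱ⟩,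
    isOpenS_interiorS h𝒰 _, (interiorS_subset h𝒰 _).trans hUT⟩

theorem stmt10 (𝒰 : Filter (X × X)) (h𝒰 : IsQuasiUniformity 𝒰) (ℱ : Filter X)
    (hds : IsDoublyStable 𝒰 ℱ) :
    ∀ T ∈ filterU 𝒰 ℱ, ∃ S ∈ filterU 𝒰 ℱ, IsOpenS 𝒰 S ∧ S ⊆ T :=
  stmt10_general 𝒰 h𝒰 ℱ
end

section
/- Two doubly stable filters ℱ and 𝒢 on a quasi-uniform space (X, 𝒰) are 𝒰_D-equivalent (i.e., (ℱ, 𝒢) ∈ U_D and (𝒢, ℱ) ∈ U_D for all U ∈ 𝒰) if and only if ℱ_𝒰 = 𝒢_𝒰. -/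
open Filter Set

variable {X Y : Type*}

/-!
`U_D`-equivalence of `ℱ` and `𝒢` just says `U_ℱ ∈ 𝒢` and `U_𝒢 ∈ ℱ` for all `U ∈ 𝒰`.
If `V ∘ V ⊆ U` and `V_ℱ ∈ 𝒢`, every point of `V_𝒢` is `V`-close, in both directions, to a
point of `V_ℱ`, which is in turn `V`-close to every member of `ℱ`; hence `V_𝒢 ⊆ U_ℱ`, and
`U_ℱ ∈ 𝒢_𝒰`. Conversely, double stability gives `𝒢 ≤ 𝒢_𝒰`, so `𝒢_𝒰 ≤ ℱ_𝒰` forces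
`U_ℱ ∈ ℱ_𝒰 ⊆ 𝒢_𝒰 ⊆ 𝒢`.
-/

section

variable {U V : Set (X × X)} {𝒰 : Filter (X × X)} {ℱ 𝒢 : Filter X}

lemma mem_bigU_iff {x : X} :
    x ∈ bigU U ℱ ↔ ∀ F ∈ ℱ, x ∈ relPre U F ∧ x ∈ relImg U F := by
  simp only [bigU, mem_iInter, mem_inter_iff, Filter.mem_sets]

lemma bigU_eq_inter :
    bigU U ℱ = (⋂ F ∈ ℱ.sets, relPre U F) ∩ (⋂ F ∈ ℱ.sets, relImg U F) := by
  ext x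
  simp only [mem_bigU_iff, mem_inter_iff, mem_iInter, Filter.mem_sets]
  exact forall₂_and

lemma mem_UD_and_mem_UD_swap_iff :
    (ℱ, 𝒢) ∈ UD U ∧ (𝒢, ℱ) ∈ UD U ↔ bigU U ℱ ∈ 𝒢 ∧ bigU U 𝒢 ∈ ℱ := by
  simp only [UD, mem_ofPred_eq, bigU_eq_inter, inter_mem_iff]
  tauto

lemma bigU_subset_bigU_of_comp_subset (hVU : SetRel.comp V V ⊆ U) (hV : bigU V 𝒢 ∈ ℱ) :
    bigU V ℱ ⊆ bigU U 𝒢 := by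
  intro x hx
  rw [mem_bigU_iff] at hx ⊢
  intro G hG
  obtain ⟨⟨y, hy, hxy⟩, ⟨z, hz, hzx⟩⟩ := hx _ hV
  obtain ⟨⟨g, hg, hyg⟩, -⟩ := mem_bigU_iff.1 hy G hG
  obtain ⟨-, ⟨g', hg', hg'z⟩⟩ := mem_bigU_iff.1 hz G hG
  exact ⟨⟨g, hg, hVU ⟨y, hxy, hyg⟩⟩, ⟨g', hg', hVU ⟨z, hg'z, hzx⟩⟩⟩

lemma bigU_mem_filterU (hU : U ∈ 𝒰) : bigU U ℱ ∈ filterU 𝒰 ℱ :=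
  mem_generate_of_mem ⟨U, hU, rfl⟩

lemma IsDoublyStable.le_filterU (hℱ : IsDoublyStable 𝒰 ℱ) : ℱ ≤ filterU 𝒰 ℱ := by
  rw [filterU, le_generate_iff]
  rintro S ⟨U, hU, rfl⟩
  exact hℱ U hU

lemma filterU_le_filterU_iff (h𝒰 : IsQuasiUniformity 𝒰) (h𝒢 : IsDoublyStable 𝒰 𝒢) :
    filterU 𝒰 𝒢 ≤ filterU 𝒰 ℱ ↔ ∀ U ∈ 𝒰, bigU U ℱ ∈ 𝒢 := by
  refine ⟨fun h U hU => h𝒢.le_filterU (h (bigU_mem_filterU hU)), fun h => ?_⟩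
  refine le_generate_iff.2 ?_
  rintro S ⟨U, hU, rfl⟩
  obtain ⟨V, hV, hVU⟩ := h𝒰.comp U hU
  exact mem_of_superset (bigU_mem_filterU hV) (bigU_subset_bigU_of_comp_subset hVU (h V hV))

end

theorem stmt15 (𝒰 : Filter (X × X)) (h𝒰 : IsQuasiUniformity 𝒰)
    (ℱ 𝒢 : Filter X) (hℱ : IsDoublyStable 𝒰 ℱ) (h𝒢 : IsDoublyStable 𝒰 𝒢) :
    (∀ U ∈ 𝒰, (ℱ, 𝒢) ∈ UD U ∧ (𝒢, ℱ) ∈ UD U) ↔ filterU 𝒰 ℱ = filterU 𝒰 𝒢 := by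
  rw [le_antisymm_iff, filterU_le_filterU_iff h𝒰 hℱ, filterU_le_filterU_iff h𝒰 h𝒢]
  simp only [mem_UD_and_mem_UD_swap_iff, ← forall₂_and]
  exact forall₂_congr fun _ _ => and_comm
end

section
/- Let (X, 𝒰) be a quasi-uniform space and A a τ(𝒰^s)-dense subset of X. If ℱ is a doubly stable filter on (X, 𝒰), then {U_ℱ ∩ A : U ∈ 𝒰} is a base for a doubly stable filter on the subspace (A, 𝒰|A), and the filter it generates on X is 𝒰_D-equivalent to ℱ. -/
open Filter Set

variable {X Y : Type*}

/-- The subspace quasi-uniformity on a subset `A`. -/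
def subUniformity (𝒰 : Filter (X × X)) (A : Set X) : Filter (A × A) :=
  Filter.comap (fun p : A × A => ((p.1 : X), (p.2 : X))) 𝒰

/-- `A` is `τ(𝒰^s)`-dense in `X`. -/
def IsDenseS (𝒰 : Filter (X × X)) (A : Set X) : Prop :=
  ∀ x : X, ∀ U ∈ 𝒰, ∃ a ∈ A, (x, a) ∈ U ∧ (a, x) ∈ U

/-!
`τ(𝒰^s)`-density lets `A` approximate each `U_ℱ` from both sides: if `x ∈ W_ℱ` with
`W ∘ W ⊆ U` and `V ∈ 𝒰`, pick `V₂ ∘ V₂ ⊆ V ∩ W`; double stability gives points `y ∈ V₂_ℱ`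
that are `W`-close to `x` on either side, and a point `a ∈ A` that is `V₂`-close to `y` in
both directions lies in `V_ℱ`. Hence `W_ℱ ⊆ U_𝒢`, where `𝒢` is the filter with base
`{V_ℱ ∩ A}`; together with `U_ℱ ∩ A ∈ 𝒢` this yields both the double stability of the
trace of `𝒢` on `A` and the `𝒰_D`-equivalence of `𝒢` and `ℱ`.
-/

lemma mem_bigU {U : Set (X × X)} {ℱ : Filter X} {x : X} :
    x ∈ bigU U ℱ ↔ ∀ F ∈ ℱ, (∃ f ∈ F, (x, f) ∈ U) ∧ ∃ f ∈ F, (f, x) ∈ U := by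
  simp only [bigU, mem_iInter, mem_inter_iff, relPre, relImg, mem_ofPred_eq]
  rfl

lemma bigU_mono_s16 (ℱ : Filter X) : Monotone fun U : Set (X × X) => bigU U ℱ :=
  fun _ _ hUV _ hx => mem_bigU.mpr fun F hF =>
    let ⟨⟨f, hf, hxf⟩, g, hg, hgx⟩ := mem_bigU.mp hx F hF
    ⟨⟨f, hf, hUV hxf⟩, g, hg, hUV hgx⟩

lemma bigU_subset_iInter_relImg (U : Set (X × X)) (ℱ : Filter X) :
    bigU U ℱ ⊆ ⋂ F ∈ ℱ.sets, relImg U F :=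
  fun _ hx => mem_iInter₂.mpr fun F hF =>
    let ⟨f, hf, hfx⟩ := (mem_bigU.mp hx F hF).2; ⟨f, hf, hfx⟩

lemma bigU_subset_iInter_relPre (U : Set (X × X)) (ℱ : Filter X) :
    bigU U ℱ ⊆ ⋂ F ∈ ℱ.sets, relPre U F :=
  fun _ hx => mem_iInter₂.mpr fun F hF =>
    let ⟨f, hf, hxf⟩ := (mem_bigU.mp hx F hF).1; ⟨f, hf, hxf⟩

lemma mem_UD_of_bigU_mem {U : Set (X × X)} {ℱ 𝒢 : Filter X}
    (hℱ𝒢 : bigU U ℱ ∈ 𝒢) (h𝒢ℱ : bigU U 𝒢 ∈ ℱ) : (ℱ, 𝒢) ∈ UD U :=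
  ⟨mem_of_superset hℱ𝒢 (bigU_subset_iInter_relImg U ℱ),
    mem_of_superset h𝒢ℱ (bigU_subset_iInter_relPre U 𝒢)⟩

lemma mem_bigU_preimage_iff (f : Y → X) {U : Set (X × X)} {𝒢 : Filter Y} {y : Y} :
    y ∈ bigU (Prod.map f f ⁻¹' U) 𝒢 ↔ f y ∈ bigU U (map f 𝒢) := by
  simp only [mem_bigU, mem_map, Prod.map, mem_preimage]
  refine ⟨fun h T hT => ?_, fun h G hG => ?_⟩
  · obtain ⟨⟨g, hg, hyg⟩, g', hg', hg'y⟩ := h _ hT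
    exact ⟨⟨f g, hg, hyg⟩, f g', hg', hg'y⟩
  · obtain ⟨⟨_, ⟨g, hg, rfl⟩, hyg⟩, _, ⟨g', hg', rfl⟩, hg'y⟩ :=
      h (f '' G) (mem_of_superset hG (subset_preimage_image f G))
    exact ⟨⟨g, hg, hyg⟩, g', hg', hg'y⟩

lemma filterU_eq_lift' (𝒰 : Filter (X × X)) (ℱ : Filter X) :
    filterU 𝒰 ℱ = 𝒰.lift' fun U => bigU U ℱ := by
  have hgen : {S | ∃ U ∈ 𝒰, S = bigU U ℱ} = (fun U => bigU U ℱ) '' 𝒰.sets := by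
    ext S; simp only [mem_ofPred_eq, mem_image, eq_comm (a := S)]; rfl
  rw [filterU, generate_eq_biInf, hgen, iInf_image]
  rfl

lemma hasBasis_filterU (𝒰 : Filter (X × X)) (ℱ : Filter X) :
    (filterU 𝒰 ℱ).HasBasis (· ∈ 𝒰) fun U => bigU U ℱ :=
  filterU_eq_lift' 𝒰 ℱ ▸ 𝒰.basis_sets.lift' (bigU_mono_s16 ℱ)

lemma hasBasis_map_val_comap_filterU (𝒰 : Filter (X × X)) (ℱ : Filter X) (A : Set X) :
    (map ((↑) : A → X) (comap (↑) (filterU 𝒰 ℱ))).HasBasis (· ∈ 𝒰)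
      fun U => bigU U ℱ ∩ A := by
  simpa only [Subtype.image_preimage_coe, inter_comm] using
    ((hasBasis_filterU 𝒰 ℱ).comap (Subtype.val : A → X)).map Subtype.val

section Dense

variable {𝒰 : Filter (X × X)} {A : Set X} {ℱ : Filter X}

lemma mem_bigU_of_mem_of_close {V V₂ : Set (X × X)} (hV₂ : SetRel.comp V₂ V₂ ⊆ V)
    {y a : X} (hy : y ∈ bigU V₂ ℱ) (hya : (y, a) ∈ V₂) (hay : (a, y) ∈ V₂) :
    a ∈ bigU V ℱ := by
  rw [mem_bigU] at hy ⊢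
  intro F hF
  obtain ⟨⟨f, hf, hyf⟩, g, hg, hgy⟩ := hy F hF
  exact ⟨⟨f, hf, hV₂ ⟨y, hay, hyf⟩⟩, g, hg, hV₂ ⟨y, hgy, hya⟩⟩

lemma exists_mem_bigU_inter_close (h𝒰 : IsQuasiUniformity 𝒰) (hA : IsDenseS 𝒰 A)
    (hds : IsDoublyStable 𝒰 ℱ) {U W : Set (X × X)} (hW : W ∈ 𝒰)
    (hWU : SetRel.comp W W ⊆ U) {x : X} (hx : x ∈ bigU W ℱ) {V : Set (X × X)} (hV : V ∈ 𝒰) :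
    (∃ a ∈ bigU V ℱ ∩ A, (x, a) ∈ U) ∧ ∃ a ∈ bigU V ℱ ∩ A, (a, x) ∈ U := by
  obtain ⟨V₂, hV₂, hV₂VW⟩ := h𝒰.comp (V ∩ W) (inter_mem hV hW)
  have hV₂W : V₂ ⊆ W := fun p hp => (hV₂VW ⟨p.1, h𝒰.refl V₂ hV₂ rfl, hp⟩).2
  have hV₂V : SetRel.comp V₂ V₂ ⊆ V := fun p hp => (hV₂VW hp).1
  obtain ⟨⟨y, hy, hxy⟩, y', hy', hy'x⟩ := mem_bigU.mp hx _ (hds V₂ hV₂)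
  obtain ⟨a, haA, hya, hay⟩ := hA y V₂ hV₂
  obtain ⟨a', ha'A, hy'a', ha'y'⟩ := hA y' V₂ hV₂
  exact ⟨⟨a, ⟨mem_bigU_of_mem_of_close hV₂V hy hya hay, haA⟩, hWU ⟨y, hxy, hV₂W hya⟩⟩,
    a', ⟨mem_bigU_of_mem_of_close hV₂V hy' hy'a' ha'y', ha'A⟩, hWU ⟨y', hV₂W ha'y', hy'x⟩⟩

lemma bigU_subset_bigU_map_val_comap_filterU (h𝒰 : IsQuasiUniformity 𝒰)
    (hA : IsDenseS 𝒰 A) (hds : IsDoublyStable 𝒰 ℱ) {U W : Set (X × X)} (hW : W ∈ 𝒰)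
    (hWU : SetRel.comp W W ⊆ U) :
    bigU W ℱ ⊆ bigU U (map ((↑) : A → X) (comap (↑) (filterU 𝒰 ℱ))) := by
  intro x hx
  refine mem_bigU.mpr fun T hT => ?_
  obtain ⟨V, hV, hVT⟩ := (hasBasis_map_val_comap_filterU 𝒰 ℱ A).mem_iff.mp hT
  obtain ⟨⟨a, ha, hxa⟩, a', ha', ha'x⟩ := exists_mem_bigU_inter_close h𝒰 hA hds hW hWU hx hV
  exact ⟨⟨a, hVT ha, hxa⟩, a', hVT ha', ha'x⟩

end Dense

theorem stmt16 (𝒰 : Filter (X × X)) (h𝒰 : IsQuasiUniformity 𝒰)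
    (A : Set X) (hA : IsDenseS 𝒰 A) (ℱ : Filter X) (hds : IsDoublyStable 𝒰 ℱ) :
    IsDoublyStable (subUniformity 𝒰 A)
        (Filter.comap (Subtype.val : A → X) (filterU 𝒰 ℱ)) ∧
    (∀ U ∈ 𝒰,
      (ℱ, Filter.map (Subtype.val : A → X)
            (Filter.comap (Subtype.val : A → X) (filterU 𝒰 ℱ))) ∈ UD U ∧
      (Filter.map (Subtype.val : A → X)
            (Filter.comap (Subtype.val : A → X) (filterU 𝒰 ℱ)), ℱ) ∈ UD U) := by
  set 𝒢 := map ((↑) : A → X) (comap (↑) (filterU 𝒰 ℱ))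
  refine ⟨fun UA hUA => ?_, fun U hU => ?_⟩
  · obtain ⟨U, hU, hUUA⟩ := mem_comap.mp hUA
    obtain ⟨W, hW, hWU⟩ := h𝒰.comp U hU
    have hU𝒢 : bigU U 𝒢 ∈ filterU 𝒰 ℱ :=
      mem_of_superset ((hasBasis_filterU 𝒰 ℱ).mem_of_mem hW)
        (bigU_subset_bigU_map_val_comap_filterU h𝒰 hA hds hW hWU)
    refine mem_of_superset (preimage_mem_comap hU𝒢) fun a ha => bigU_mono_s16 _ hUUA ?_
    exact (mem_bigU_preimage_iff Subtype.val).mpr ha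
  · obtain ⟨W, hW, hWU⟩ := h𝒰.comp U hU
    have hℱ𝒢 : bigU U ℱ ∈ 𝒢 :=
      (hasBasis_map_val_comap_filterU 𝒰 ℱ A).mem_of_superset hU inter_subset_left
    have h𝒢ℱ : bigU U 𝒢 ∈ ℱ :=
      mem_of_superset (hds W hW) (bigU_subset_bigU_map_val_comap_filterU h𝒰 hA hds hW hWU)
    exact ⟨mem_UD_of_bigU_mem hℱ𝒢 h𝒢ℱ, mem_UD_of_bigU_mem h𝒢ℱ hℱ𝒢⟩
end
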